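/- Let n ≥ 3 and U(y) = (1+|y|^2)^{-(n-2)/2} on R^n. Then there exists C_0 > 0 depending only on n and λ_0 = -2 such that for all y with y_1 > -2, U(y) - U(y^{-2}) ≥ C_0 (y_1 + 2)/(1+|y|)^n, where y^{-2} = (-4 - y_1, y') is the reflection across {y_1 = -2}. -/
import Mathlib


theorem stmt14 (n : ℕ) (hn : 3 ≤ n) (U : EuclideanSpace ℝ (Fin n) → ℝ)
    (hU : ∀ y, U y = (1 + ‖y‖ ^ 2) ^ (-((n : ℝ) - 2) / 2)) :
    ∃ C0 > (0 : ℝ), ∀ y : EuclideanSpace ℝ (Fin n),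
      -2 < y (⟨0, by omega⟩ : Fin n) →
      ∀ yr : EuclideanSpace ℝ (Fin n),
        yr (⟨0, by omega⟩ : Fin n) = -4 - y (⟨0, by omega⟩ : Fin n) →
        (∀ i : Fin n, i ≠ (⟨0, by omega⟩ : Fin n) → yr i = y i) →
        C0 * (y (⟨0, by omega⟩ : Fin n) + 2) / (1 + ‖y‖) ^ n ≤ U y - U yr := by
  refine ⟨4 / 5 ^ n, by positivity, ?_⟩
  intro y hy yr hr1 hr2
  set i0 : Fin n := ⟨0, by omega⟩ with hi0
  set t : ℝ := y i0 + 2 with ht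
  have ht0 : 0 < t := by simp only [ht]; linarith
  have hsum : ∀ z : EuclideanSpace ℝ (Fin n), ‖z‖ ^ 2 = ∑ i, (z i) ^ 2 := by
    intro z
    rw [EuclideanSpace.norm_eq, Real.sq_sqrt (by positivity)]
    congr 1; ext i; rw [Real.norm_eq_abs, sq_abs]
  have hmem : i0 ∈ Finset.univ := Finset.mem_univ _
  have hsplit : ∀ z : EuclideanSpace ℝ (Fin n),
      ∑ i, (z i) ^ 2 = (z i0) ^ 2 + ∑ i ∈ Finset.univ.erase i0, (z i) ^ 2 :=
    fun z => (Finset.add_sum_erase _ _ hmem).symm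
  have hre : ∑ i ∈ Finset.univ.erase i0, (yr i) ^ 2
      = ∑ i ∈ Finset.univ.erase i0, (y i) ^ 2 :=
    Finset.sum_congr rfl fun i hi => by rw [hr2 i (Finset.ne_of_mem_erase hi)]
  have hnyr : ‖yr‖ ^ 2 = ‖y‖ ^ 2 + 8 * t := by
    rw [hsum, hsum, hsplit, hsplit, hre, hr1, ht]
    ring
  set A : ℝ := 1 + ‖y‖ ^ 2 with hA
  set B : ℝ := 1 + ‖yr‖ ^ 2 with hB
  have hA1 : 1 ≤ A := by simp only [hA]; nlinarith [sq_nonneg ‖y‖]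
  have hBA : B = A + 8 * t := by rw [hA, hB, hnyr]; ring
  have hB1 : 1 ≤ B := by rw [hBA]; linarith
  set u := Real.sqrt A with hu
  set v := Real.sqrt B with hv
  have hu1 : 1 ≤ u := by
    rw [show (1:ℝ) = Real.sqrt 1 by simp, hu]; exact Real.sqrt_le_sqrt hA1
  have huv : u ≤ v := Real.sqrt_le_sqrt (by linarith)
  have hv1 : 1 ≤ v := le_trans hu1 huv
  have hu0 : (0:ℝ) < u := lt_of_lt_of_le one_pos hu1
  have hv0 : (0:ℝ) < v := lt_of_lt_of_le one_pos hv1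
  have hu2 : u ^ 2 = A := Real.sq_sqrt (by linarith)
  have hv2 : v ^ 2 = B := Real.sq_sqrt (by linarith)
  have hyle : y i0 ≤ ‖y‖ := by
    have h1 : (y i0) ^ 2 ≤ ‖y‖ ^ 2 := by
      rw [hsum]
      exact Finset.single_le_sum (f := fun i => (y i) ^ 2) (fun i _ => sq_nonneg _) hmem
    have h2 := Real.sqrt_le_sqrt h1
    rw [Real.sqrt_sq_eq_abs, Real.sqrt_sq (norm_nonneg y)] at h2
    exact (le_abs_self _).trans h2
  have hvle : v ≤ 5 * (1 + ‖y‖) := by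
    have hB' : B ≤ (5 * (1 + ‖y‖)) ^ 2 := by
      rw [hBA, hA, ht]; nlinarith [norm_nonneg y, hyle]
    calc v ≤ Real.sqrt ((5 * (1 + ‖y‖)) ^ 2) := Real.sqrt_le_sqrt hB'
      _ = 5 * (1 + ‖y‖) := Real.sqrt_sq (by positivity)
  have hUeq : ∀ x : ℝ, 1 ≤ x → x ^ (-((n:ℝ) - 2) / 2) = ((Real.sqrt x) ^ (n - 2))⁻¹ := by
    intro x hx
    have hx0 : (0:ℝ) ≤ x := by linarith
    have hc : ((n - 2 : ℕ) : ℝ) = (n : ℝ) - 2 := by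
      rw [Nat.cast_sub (by omega)]; norm_num
    rw [show -((n:ℝ) - 2) / 2 = (1/2 : ℝ) * (-((n - 2 : ℕ) : ℝ)) by rw [hc]; ring]
    rw [Real.rpow_mul hx0, ← Real.sqrt_eq_rpow,
      Real.rpow_neg (Real.sqrt_nonneg x), Real.rpow_natCast]
  have hUy : U y = (u ^ (n - 2))⁻¹ := by rw [hU y]; exact hUeq A hA1
  have hUyr : U yr = (v ^ (n - 2))⁻¹ := by rw [hU yr]; exact hUeq B hB1
  set m := n - 2 with hm
  set k := n - 3 with hk
  have hmk : m = k + 1 := by omega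
  have hnm : n = m + 2 := by omega
  rw [hUy, hUyr]
  have key2 : 4 * t ≤ v * (v - u) := by
    have hdiff : (v - u) * (v + u) = 8 * t := by
      have h : v ^ 2 - u ^ 2 = 8 * t := by rw [hu2, hv2, hBA]; ring
      linear_combination h
    have hexp : 2 * (v * (v - u)) = (v - u) * (v + u) + (v - u) ^ 2 := by ring
    linarith [sq_nonneg (v - u), hdiff, hexp]
  have hpow : u ^ k ≤ v ^ k := pow_le_pow_left₀ hu0.le huv k
  have h4 : (0:ℝ) ≤ v - u := by linarith
  have h3 : u ^ k * (v - u) ≤ v ^ m - u ^ m := by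
    rw [hmk]
    have hh : u ^ k * v ≤ v ^ k * v := mul_le_mul_of_nonneg_right hpow hv0.le
    calc u ^ k * (v - u) = u ^ k * v - u ^ k * u := by ring
      _ ≤ v ^ k * v - u ^ k * u := by linarith
      _ = v ^ (k + 1) - u ^ (k + 1) := by ring
  have key : 4 * t * u ^ m ≤ (v ^ m - u ^ m) * v ^ 2 := by
    calc 4 * t * u ^ m = (4 * t) * (u ^ k * u) := by rw [hmk]; ring
      _ ≤ (v * (v - u)) * (u ^ k * u) := by
          exact mul_le_mul_of_nonneg_right key2 (by positivity)
      _ = (u ^ k * (v - u)) * (u * v) := by ring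
      _ ≤ (u ^ k * (v - u)) * (v * v) := by
          exact mul_le_mul_of_nonneg_left
            (mul_le_mul_of_nonneg_right huv hv0.le)
            (mul_nonneg (by positivity) h4)
      _ = (u ^ k * (v - u)) * v ^ 2 := by ring
      _ ≤ (v ^ m - u ^ m) * v ^ 2 := mul_le_mul_of_nonneg_right h3 (by positivity)
  have hdiffeq : (u ^ m)⁻¹ - (v ^ m)⁻¹ = (v ^ m - u ^ m) / (u ^ m * v ^ m) := by
    field_simp
  have step1 : 4 * t / v ^ n ≤ (v ^ m - u ^ m) / (u ^ m * v ^ m) := by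
    rw [div_le_div_iff₀ (by positivity) (by positivity)]
    calc 4 * t * (u ^ m * v ^ m) = (4 * t * u ^ m) * v ^ m := by ring
      _ ≤ ((v ^ m - u ^ m) * v ^ 2) * v ^ m :=
          mul_le_mul_of_nonneg_right key (by positivity)
      _ = (v ^ m - u ^ m) * v ^ n := by rw [hnm]; ring
  have step2 : 4 / 5 ^ n * t / (1 + ‖y‖) ^ n ≤ 4 * t / v ^ n := by
    rw [show (4 / 5 ^ n : ℝ) * t / (1 + ‖y‖) ^ n
        = 4 * t / (5 ^ n * (1 + ‖y‖) ^ n) by ring]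
    have hvn : v ^ n ≤ 5 ^ n * (1 + ‖y‖) ^ n := by
      calc v ^ n ≤ (5 * (1 + ‖y‖)) ^ n := pow_le_pow_left₀ hv0.le hvle n
        _ = 5 ^ n * (1 + ‖y‖) ^ n := mul_pow _ _ _
    exact div_le_div_of_nonneg_left (by linarith) (by positivity) hvn
  rw [hdiffeq]
  exact step2.trans step1
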